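/- Assume the subsonic condition γρ*^{γ−1} > m*²/ρ*². Then for every ξ ∈ ℝ one has α(ξ) > 0, the matrix S(ξ) = diag(α(ξ), 1) is symmetric and positive definite, S(ξ)A(ξ) = [[0, α(ξ)], [α(ξ), 2m*/ρ*]] is symmetric, and S(ξ)B(ξ) = ξ²·diag(0, μ) is symmetric and positive semidefinite. In other words, S(ξ) is a symbol symmetrizer for the linearized viscous QHD system. -/

import Mathlib

lemma posdef_diag2 {a : ℝ} (ha : 0 < a) :
    (!![a, 0; 0, 1] : Matrix (Fin 2) (Fin 2) ℝ).PosDef := by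
  rw [Matrix.posDef_iff_dotProduct_mulVec]
  constructor
  · ext i j; fin_cases i <;> fin_cases j <;> rfl
  · intro x hx
    have h : x 0 ≠ 0 ∨ x 1 ≠ 0 := by
      by_contra h
      push_neg at h
      exact hx (funext fun i => by fin_cases i <;> simp [h.1, h.2])
    simp [dotProduct, Matrix.mulVec, Fin.sum_univ_two]
    rcases h with h | h <;>
      nlinarith [mul_self_nonneg (x 0), mul_self_nonneg (x 1), mul_self_pos.mpr h]

lemma possemidef_B {μ : ℝ} (hμ : 0 < μ) (ξ : ℝ) :
    ((ξ ^ 2 • !![0, 0; 0, μ]) : Matrix (Fin 2) (Fin 2) ℝ).PosSemidef := by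
  rw [Matrix.posSemidef_iff_dotProduct_mulVec]
  constructor
  · ext i j; fin_cases i <;> fin_cases j <;> rfl
  · intro x
    simp [dotProduct, Matrix.mulVec, Fin.sum_univ_two]
    nlinarith [mul_nonneg (mul_nonneg (sq_nonneg ξ) hμ.le) (mul_self_nonneg (x 1))]

/-- `α(ξ) = p'(ρ*) − m*²/ρ*² + (k²/2)ξ²` with `p(ρ) = ρ^γ`. -/
noncomputable def alphaSym (ρs ms k γ ξ : ℝ) : ℝ :=
  γ * ρs ^ (γ - 1) - ms ^ 2 / ρs ^ 2 + k ^ 2 / 2 * ξ ^ 2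

/-- Under the subsonic condition, `S(ξ) = diag(α(ξ),1)` is a symbol symmetrizer for the
linearized viscous QHD system: `α(ξ) > 0`, `S(ξ)` is symmetric positive definite,
`S(ξ)A(ξ) = [[0, α(ξ)],[α(ξ), 2m*/ρ*]]` is symmetric, and `S(ξ)B(ξ) = ξ²·diag(0,μ)` is
symmetric positive semidefinite. -/
theorem subsonic_symbol_symmetrizer
    (ρs ms μ k γ : ℝ) (hρ : 0 < ρs) (hμ : 0 < μ) (hk : 0 < k) (hγ : 1 < γ)
    (hsub : ms ^ 2 / ρs ^ 2 < γ * ρs ^ (γ - 1)) :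
    ∀ ξ : ℝ,
      0 < alphaSym ρs ms k γ ξ ∧
      (!![alphaSym ρs ms k γ ξ, 0; 0, 1] : Matrix (Fin 2) (Fin 2) ℝ).IsSymm ∧
      (!![alphaSym ρs ms k γ ξ, 0; 0, 1] : Matrix (Fin 2) (Fin 2) ℝ).PosDef ∧
      (!![alphaSym ρs ms k γ ξ, 0; 0, 1] : Matrix (Fin 2) (Fin 2) ℝ) *
          !![0, 1; alphaSym ρs ms k γ ξ, 2 * ms / ρs]
        = !![0, alphaSym ρs ms k γ ξ; alphaSym ρs ms k γ ξ, 2 * ms / ρs] ∧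
      ((!![alphaSym ρs ms k γ ξ, 0; 0, 1] : Matrix (Fin 2) (Fin 2) ℝ) *
          !![0, 1; alphaSym ρs ms k γ ξ, 2 * ms / ρs]).IsSymm ∧
      (!![alphaSym ρs ms k γ ξ, 0; 0, 1] : Matrix (Fin 2) (Fin 2) ℝ) *
          (ξ ^ 2 • !![0, 0; 0, μ])
        = ξ ^ 2 • !![0, 0; 0, μ] ∧
      ((!![alphaSym ρs ms k γ ξ, 0; 0, 1] : Matrix (Fin 2) (Fin 2) ℝ) *
          (ξ ^ 2 • !![0, 0; 0, μ])).IsSymm ∧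
      ((!![alphaSym ρs ms k γ ξ, 0; 0, 1] : Matrix (Fin 2) (Fin 2) ℝ) *
          (ξ ^ 2 • !![0, 0; 0, μ])).PosSemidef := by
  intro ξ
  have halpha : 0 < alphaSym ρs ms k γ ξ := by
    have h1 : (0:ℝ) ≤ k ^ 2 / 2 * ξ ^ 2 := by positivity
    unfold alphaSym; linarith
  have hSA : (!![alphaSym ρs ms k γ ξ, 0; 0, 1] : Matrix (Fin 2) (Fin 2) ℝ) *
        !![0, 1; alphaSym ρs ms k γ ξ, 2 * ms / ρs]
      = !![0, alphaSym ρs ms k γ ξ; alphaSym ρs ms k γ ξ, 2 * ms / ρs] := by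
    ext i j
    fin_cases i <;> fin_cases j <;>
      simp [Matrix.mul_apply, Fin.sum_univ_two]
  have hSB : (!![alphaSym ρs ms k γ ξ, 0; 0, 1] : Matrix (Fin 2) (Fin 2) ℝ) *
        (ξ ^ 2 • !![0, 0; 0, μ]) = ξ ^ 2 • !![0, 0; 0, μ] := by
    ext i j
    fin_cases i <;> fin_cases j <;>
      simp [Matrix.mul_apply, Fin.sum_univ_two]
  refine ⟨halpha, ?_, posdef_diag2 halpha, hSA, ?_, hSB, ?_, ?_⟩
  · ext i j; fin_cases i <;> fin_cases j <;> rfl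
  · rw [hSA]; ext i j; fin_cases i <;> fin_cases j <;> rfl
  · rw [hSB]; ext i j; fin_cases i <;> fin_cases j <;> rfl
  · rw [hSB]; exact possemidef_B hμ ξ
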